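/- The normalizer of the circle subgroup Z = {diag(z,z,z⁻²) : |z|=1} in SU(3) equals the embedded copy of U(2) (block matrices A ⊕ (det A)⁻¹). -/

import Mathlib

open Matrix Complex

noncomputable section

noncomputable instance SUGroup {n : Type*} [Fintype n] [DecidableEq n] :
    Group ↥(Matrix.specialUnitaryGroup n ℂ) :=
  { (inferInstance : Monoid ↥(Matrix.specialUnitaryGroup n ℂ)) with
    inv := fun g => ⟨star g.val,
      Matrix.mem_specialUnitaryGroup_iff.mpr
        ⟨Unitary.star_mem (Matrix.mem_specialUnitaryGroup_iff.mp g.prop).1, by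
          rw [Matrix.star_eq_conjTranspose, Matrix.det_conjTranspose,
            (Matrix.mem_specialUnitaryGroup_iff.mp g.prop).2, star_one]⟩⟩
    inv_mul_cancel := fun g =>
      Subtype.ext (Matrix.mem_specialUnitaryGroup_iff.mp g.prop).1.1 }

abbrev SU3 := ↥(Matrix.specialUnitaryGroup (Fin 3) ℂ)

lemma SU3.coe_inv (g : SU3) :
    ((g⁻¹ : SU3) : Matrix (Fin 3) (Fin 3) ℂ) = star (g : Matrix (Fin 3) (Fin 3) ℂ) := rfl

lemma isDiag_mul {A B : Matrix (Fin 3) (Fin 3) ℂ} (hA : A.IsDiag) (hB : B.IsDiag) :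
    (A * B).IsDiag := by
  intro i j hij
  rw [Matrix.mul_apply]
  refine Finset.sum_eq_zero fun k _ => ?_
  rcases eq_or_ne i k with rfl | hik
  · rw [hB hij, mul_zero]
  · rw [hA hik, zero_mul]

/-- The diagonal maximal torus of `SU(3)`. -/
def diagTorus : Subgroup SU3 where
  carrier := {g | (g : Matrix (Fin 3) (Fin 3) ℂ).IsDiag}
  one_mem' := Matrix.isDiag_one
  mul_mem' := fun ha hb => isDiag_mul ha hb
  inv_mem' := fun {g} hg => by
    show (star (g : Matrix (Fin 3) (Fin 3) ℂ)).IsDiag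
    exact hg.conjTranspose
/-- The embedded `U(2)` in `SU(3)`: matrices vanishing at positions
`(1,3),(2,3),(3,1),(3,2)` (0-indexed: `(0,2),(1,2),(2,0),(2,1)`). -/
def embU2 : Subgroup SU3 where
  carrier := {g | (g : Matrix (Fin 3) (Fin 3) ℂ) 0 2 = 0 ∧
    (g : Matrix (Fin 3) (Fin 3) ℂ) 1 2 = 0 ∧
    (g : Matrix (Fin 3) (Fin 3) ℂ) 2 0 = 0 ∧
    (g : Matrix (Fin 3) (Fin 3) ℂ) 2 1 = 0}
  one_mem' := by
    refine ⟨?_, ?_, ?_, ?_⟩ <;> simp [Matrix.one_apply]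
  mul_mem' := by
    intro a b ha hb
    obtain ⟨ha1, ha2, ha3, ha4⟩ := ha
    obtain ⟨hb1, hb2, hb3, hb4⟩ := hb
    refine ⟨?_, ?_, ?_, ?_⟩ <;>
      · show ((a : Matrix (Fin 3) (Fin 3) ℂ) * (b : Matrix (Fin 3) (Fin 3) ℂ)) _ _ = 0
        rw [Matrix.mul_apply, Fin.sum_univ_three]
        simp [ha1, ha2, ha3, ha4, hb1, hb2, hb3, hb4]
  inv_mem' := by
    intro g hg
    obtain ⟨h1, h2, h3, h4⟩ := hg
    refine ⟨?_, ?_, ?_, ?_⟩ <;>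
      · show (star (g : Matrix (Fin 3) (Fin 3) ℂ)) _ _ = 0
        simp only [Matrix.star_eq_conjTranspose, Matrix.conjTranspose_apply]
        simp [h1, h2, h3, h4]

/-- The circle subgroup `Z = {diag(z, z, z⁻²)}` of `SU(3)` (the centre of the
embedded `U(2)`). -/
def circleZ : Subgroup SU3 where
  carrier := {g | ∃ z : ℂ,
    (g : Matrix (Fin 3) (Fin 3) ℂ) = Matrix.diagonal ![z, z, (z * z)⁻¹]}
  one_mem' := ⟨1, by
    have : ![(1 : ℂ), 1, (1 * 1 : ℂ)⁻¹] = fun _ => (1 : ℂ) := by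
      funext i; fin_cases i <;> norm_num
    rw [this]
    show (1 : Matrix (Fin 3) (Fin 3) ℂ) = _
    rw [← Matrix.diagonal_one]⟩
  mul_mem' := by
    rintro a b ⟨z, hz⟩ ⟨w, hw⟩
    refine ⟨z * w, ?_⟩
    show (a : Matrix (Fin 3) (Fin 3) ℂ) * (b : Matrix (Fin 3) (Fin 3) ℂ) = _
    rw [hz, hw, Matrix.diagonal_mul_diagonal]
    apply congrArg Matrix.diagonal
    funext i
    fin_cases i
    · simp
    · simp
    · show ![z, z, (z * z)⁻¹] 2 * ![w, w, (w * w)⁻¹] 2 = (z * w * (z * w))⁻¹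
      show (z * z)⁻¹ * (w * w)⁻¹ = (z * w * (z * w))⁻¹
      rw [← mul_inv]
      congr 1
      ring
  inv_mem' := by
    rintro g ⟨z, hz⟩
    refine ⟨(starRingEnd ℂ) z, ?_⟩
    show star (g : Matrix (Fin 3) (Fin 3) ℂ) = _
    rw [hz, Matrix.star_eq_conjTranspose, Matrix.diagonal_conjTranspose]
    apply congrArg Matrix.diagonal
    funext i
    fin_cases i
    · simp [Complex.star_def]
    · simp [Complex.star_def]
    · show star (![z, z, (z * z)⁻¹] 2) = ((starRingEnd ℂ) z * (starRingEnd ℂ) z)⁻¹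
      show star ((z * z)⁻¹) = ((starRingEnd ℂ) z * (starRingEnd ℂ) z)⁻¹
      rw [star_inv₀, star_mul']
      rfl

/-!
Elements of the embedded `U(2)` are block diagonal, with blocks matching the eigenspaces of
`diag(z, z, z⁻²)`, so they centralize `Z`. Conversely, if `g` normalizes `Z` then it conjugates
`d = diag(i, i, -1)` to some `e = diag(w, w, w⁻²)`, and `g d = e g` forces `g i j = 0` whenever
`d j ≠ e i`. For `w = i` this kills exactly the entries off the blocks; for `w ≠ i` it kills the
upper-left `2 × 2` block, which would make `det g = 0`.
-/

namespace Matrix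

variable {n R : Type*} [Fintype n] [DecidableEq n]

theorem apply_eq_zero_of_mul_diagonal_eq_diagonal_mul [CommRing R] [NoZeroDivisors R]
    {A : Matrix n n R} {d e : n → R} (h : A * diagonal d = diagonal e * A) {i j : n}
    (hij : d j ≠ e i) : A i j = 0 := by
  have hij' := congr_fun₂ h i j
  rw [mul_diagonal, diagonal_mul] at hij'
  have : (d j - e i) * A i j = 0 := by linear_combination hij'
  exact (mul_eq_zero.mp this).resolve_left (sub_ne_zero.mpr hij)

theorem commute_diagonal_of_apply_eq_zero [CommSemiring R] {A : Matrix n n R} {d : n → R}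
    (h : ∀ i j, d i ≠ d j → A i j = 0) : Commute (diagonal d) A := by
  ext i j
  rw [mul_diagonal, diagonal_mul]
  by_cases hij : d i = d j
  · rw [hij, mul_comm]
  · rw [h i j hij, zero_mul, mul_zero]

theorem det_fin_three_eq_zero_of_topLeft_eq_zero [CommRing R] {A : Matrix (Fin 3) (Fin 3) R}
    (h₀₀ : A 0 0 = 0) (h₀₁ : A 0 1 = 0) (h₁₀ : A 1 0 = 0) (h₁₁ : A 1 1 = 0) :
    A.det = 0 := by
  rw [det_fin_three, h₀₀, h₀₁, h₁₀, h₁₁]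
  ring

end Matrix

lemma SU3.coe_mul (a b : SU3) :
    ((a * b : SU3) : Matrix (Fin 3) (Fin 3) ℂ) =
      (a : Matrix (Fin 3) (Fin 3) ℂ) * (b : Matrix (Fin 3) (Fin 3) ℂ) := rfl

lemma SU3.coe_mul_eq_mul_coe_of_coe_conj_eq {g h : SU3} {M : Matrix (Fin 3) (Fin 3) ℂ}
    (hM : ((g * h * g⁻¹ : SU3) : Matrix (Fin 3) (Fin 3) ℂ) = M) :
    (g : Matrix (Fin 3) (Fin 3) ℂ) * h = M * g := by
  rw [← hM, ← SU3.coe_mul, ← SU3.coe_mul, inv_mul_cancel_right]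

lemma diagonal_circle_mem_specialUnitaryGroup {z : ℂ} (hz : ‖z‖ = 1) :
    diagonal ![z, z, (z * z)⁻¹] ∈ specialUnitaryGroup (Fin 3) ℂ := by
  have hconj_mul : starRingEnd ℂ z * z = 1 := by
    rw [← normSq_eq_conj_mul_self, normSq_eq_norm_sq, hz]; norm_num
  have hz0 : z ≠ 0 := by rintro rfl; simp at hz
  have hconj : starRingEnd ℂ z = z⁻¹ := eq_inv_of_mul_eq_one_left hconj_mul
  refine mem_specialUnitaryGroup_iff.mpr ⟨mem_unitaryGroup_iff'.mpr ?_, ?_⟩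
  · rw [star_eq_conjTranspose, diagonal_conjTranspose, diagonal_mul_diagonal,
      ← diagonal_one]
    congr 1
    funext i
    fin_cases i <;> simp [hconj, hz0, mul_mul_mul_comm z z]
  · rw [det_diagonal, Fin.prod_univ_three]
    simp only [cons_val_zero, cons_val_one, cons_val_two, head_cons, tail_cons]
    field_simp

lemma embU2_le_centralizer_circleZ : embU2 ≤ Subgroup.centralizer (circleZ : Set SU3) := by
  rintro g ⟨h₀₂, h₁₂, h₂₀, h₂₁⟩
  rw [Subgroup.mem_centralizer_iff]
  rintro k ⟨z, hz⟩
  refine Subtype.ext ?_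
  rw [SU3.coe_mul, SU3.coe_mul, hz]
  refine commute_diagonal_of_apply_eq_zero fun i j hij => ?_
  fin_cases i <;> fin_cases j <;> simp_all

lemma normalizer_circleZ_le_embU2 : Subgroup.normalizer (circleZ : Set SU3) ≤ embU2 := by
  intro g hg
  let d : SU3 := ⟨_, diagonal_circle_mem_specialUnitaryGroup (z := I) (by simp)⟩
  obtain ⟨w, hw⟩ := (hg d).mp ⟨I, rfl⟩
  have hentry {i j : Fin 3} := apply_eq_zero_of_mul_diagonal_eq_diagonal_mul
    (SU3.coe_mul_eq_mul_coe_of_coe_conj_eq hw) (i := i) (j := j)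
  have hI : I ≠ -1 := fun h => by simpa using congrArg im h
  by_cases hwI : w = I
  · subst hwI
    refine ⟨hentry ?_, hentry ?_, hentry ?_, hentry ?_⟩ <;> simp [hI, hI.symm]
  · refine absurd (mem_specialUnitaryGroup_iff.mp g.prop).2 ?_
    rw [det_fin_three_eq_zero_of_topLeft_eq_zero (hentry ?_) (hentry ?_) (hentry ?_) (hentry ?_)]
    all_goals simp [Ne.symm hwI]

/-- The normalizer of the circle `Z = {diag(z,z,z⁻²)}` in `SU(3)`
equals the embedded `U(2)`. -/
theorem normalizer_circleZ_eq_embU2 : Subgroup.normalizer (circleZ : Set SU3) = embU2 :=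
  le_antisymm normalizer_circleZ_le_embU2
    (embU2_le_centralizer_circleZ.trans (Subgroup.centralizer_le_normalizer _))
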